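/- Let n ≥ 1, let F be a cdf which is continuous on ℝ, let G_1,…,G_m be cdfs, and let 𝒰, ϑ : [0,1]^m → ℝ and μ_j, ℓ_j, m_j, ν_j : [0,1]^m → EReal (j = 1,…,n) be functions, continuous on [0,1]^m, such that: (d1) 𝒰 and ϑ are non-negative; (d2) 𝒰, each μ_j and each m_j are non-decreasing in each variable, and ϑ, each ν_j and each ℓ_j are non-increasing in each variable; (d3) if 𝒰(0,…,0) ≠ ϑ(0,…,0), then (𝒰(0,…,0) = 0 or μ_j(0,…,0) = ℓ_j(0,…,0) for all j) and (ϑ(0,…,0) = 0 or m_j(0,…,0) = ν_j(0,…,0) for all j); (d4) if 𝒰(0,…,0) = ϑ(0,…,0) ≠ 0, then μ_j(0,…,0) = ν_j(0,…,0) and m_j(0,…,0) = ℓ_j(0,…,0) for all j; (d5) ℓ_j(0,…,0) ≤ μ_j(0,…,0) for all j, and if ϑ(0,…,0) ≠ 0 then m_j(1,…,1) ≤ ν_j(1,…,1) for all j; (d6) μ_n(1,…,1) ≥ sup{x ∈ ℝ : F(x) < 1} and ℓ_1(1,…,1) ≤ inf{x ∈ ℝ : F(x) > 0}; (d7) 𝒰(1,…,1)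 = 1; (d8) ϑ(1,…,1) = 0 or ν_j(1,…,1) = m_j(1,…,1) for all j; (d9) μ_j(1,…,1) = ℓ_{j+1}(1,…,1) for all j = 1,…,n−1. Then, writing (·)(x) = (G_1(x),…,G_m(x)), the function H(x) = 𝒰(·)(x)·Σ_{j=1}^n (F̄(μ_j(·)(x)) − F̄(ℓ_j(·)(x))) − ϑ(·)(x)·Σ_{j=1}^n (F̄(ν_j(·)(x)) − F̄(m_j(·)(x))) is a cdf. -/

import Mathlib

/-!
On the cube `[0,1]^m` put `Φ(t) = 𝒰(t) S(t) - ϑ(t) T(t)` with `S(t) = ∑ⱼ (F̄(μⱼ t) - F̄(ℓⱼ t))` and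
`T(t) = ∑ⱼ (F̄(νⱼ t) - F̄(mⱼ t))`; then `H = Φ ∘ (G₁, …, Gₘ)`. Since `F̄` is monotone and continuous on
`EReal`, `S` is monotone and non-negative and `T` is antitone, non-negative unless `ϑ ≡ 0`, so `Φ`
is monotone and continuous. Conditions (d3), (d4) force `Φ(0) = 0`; by (d9) the sum `S(1)`
telescopes to `F̄(μₙ 1) - F̄(ℓ₁ 1) = 1` by (d6), so `Φ(1) = 1` by (d7), (d8). Monotonicity, right
continuity and the limits at `±∞` then pass from the `Gᵢ` to `Φ ∘ G`.
-/

open Filter Topology Set BigOperators unitInterval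

/-- A cumulative distribution function: non-decreasing, right-continuous,
tending to 0 at `-∞` and to 1 at `+∞`. -/
def IsCDF (F : ℝ → ℝ) : Prop :=
  Monotone F ∧ (∀ x : ℝ, ContinuousWithinAt F (Set.Ici x) x) ∧
    Tendsto F atBot (nhds 0) ∧ Tendsto F atTop (nhds 1)

/-- The extension of a cdf to the extended reals, with value 0 at `⊥` and 1 at `⊤`. -/
noncomputable def extCDF (F : ℝ → ℝ) (a : EReal) : ℝ :=
  if a = ⊥ then 0 else if a = ⊤ then 1 else F a.toReal

lemma IsCDF.nonneg {F : ℝ → ℝ} (hF : IsCDF F) (x : ℝ) : 0 ≤ F x :=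
  le_of_tendsto hF.2.2.1 (eventually_atBot.2 ⟨x, fun _ hy => hF.1 hy⟩)

lemma IsCDF.le_one {F : ℝ → ℝ} (hF : IsCDF F) (x : ℝ) : F x ≤ 1 :=
  ge_of_tendsto hF.2.2.2 (eventually_atTop.2 ⟨x, fun _ hy => hF.1 hy⟩)

lemma isCDF_comp_of_monotone {ι : Type*} {G : ι → ℝ → ℝ} (hG : ∀ i, IsCDF (G i))
    (hG01 : ∀ i x, G i x ∈ I) {Φ : (ι → I) → ℝ} (hΦm : Monotone Φ) (hΦc : Continuous Φ)
    (hΦ0 : Φ 0 = 0) (hΦ1 : Φ 1 = 1) :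
    IsCDF fun x => Φ fun i => ⟨G i x, hG01 i x⟩ := by
  have hg_right : ∀ x, ContinuousWithinAt (fun x i => (⟨G i x, hG01 i x⟩ : I)) (Ici x) x :=
    fun x => continuousWithinAt_pi.2 fun i => tendsto_subtype_rng.2 ((hG i).2.1 x)
  have hg_bot : Tendsto (fun x i => (⟨G i x, hG01 i x⟩ : I)) atBot (𝓝 0) :=
    tendsto_pi_nhds.2 fun i => tendsto_subtype_rng.2 (hG i).2.2.1
  have hg_top : Tendsto (fun x i => (⟨G i x, hG01 i x⟩ : I)) atTop (𝓝 1) :=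
    tendsto_pi_nhds.2 fun i => tendsto_subtype_rng.2 (hG i).2.2.2
  refine ⟨hΦm.comp fun a b hab i => Subtype.mk_le_mk.2 ((hG i).1 hab),
    fun x => hΦc.continuousAt.comp_continuousWithinAt (hg_right x), ?_, ?_⟩
  · rw [← hΦ0]; exact (hΦc.tendsto 0).comp hg_bot
  · rw [← hΦ1]; exact (hΦc.tendsto 1).comp hg_top

section extCDF

variable {F : ℝ → ℝ}

@[simp] lemma extCDF_bot : extCDF F ⊥ = 0 := by simp [extCDF]

@[simp] lemma extCDF_top : extCDF F ⊤ = 1 := by simp [extCDF]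

@[simp] lemma extCDF_coe (x : ℝ) : extCDF F x = F x := by simp [extCDF]

lemma extCDF_mono (hF : IsCDF F) : Monotone (extCDF F) := by
  intro a b hab
  induction a using EReal.rec with
  | bot =>
    induction b using EReal.rec with
    | bot => rfl
    | coe y => simpa using hF.nonneg y
    | top => simp
  | coe x =>
    induction b using EReal.rec with
    | bot => simp at hab
    | coe y => simpa using hF.1 (EReal.coe_le_coe_iff.1 hab)
    | top => simpa using hF.le_one x
  | top => rw [top_le_iff.1 hab]

lemma continuous_extCDF (hF : IsCDF F) (hFc : Continuous F) : Continuous (extCDF F) := by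
  refine continuous_iff_continuousAt.2 fun a => ?_
  induction a using EReal.rec with
  | bot =>
    rw [ContinuousAt, extCDF_bot, Metric.tendsto_nhds]
    intro ε hε
    obtain ⟨c, hc⟩ := eventually_atBot.1 (Metric.tendsto_nhds.1 hF.2.2.1 ε hε)
    filter_upwards [Iio_mem_nhds (EReal.bot_lt_coe c)] with x hx
    induction x using EReal.rec with
    | bot => simpa using hε
    | coe y => simpa using hc y (EReal.coe_lt_coe_iff.1 hx).le
    | top => simp at hx
  | top =>
    rw [ContinuousAt, extCDF_top, Metric.tendsto_nhds]
    intro ε hε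
    obtain ⟨c, hc⟩ := eventually_atTop.1 (Metric.tendsto_nhds.1 hF.2.2.2 ε hε)
    filter_upwards [Ioi_mem_nhds (EReal.coe_lt_top c)] with x hx
    induction x using EReal.rec with
    | bot => simp at hx
    | coe y => simpa using hc y (EReal.coe_lt_coe_iff.1 hx).le
    | top => simpa using hε
  | coe t =>
    refine (hFc.continuousAt.comp (EReal.tendsto_toReal (by simp) (by simp))).congr ?_
    filter_upwards [Ioo_mem_nhds (EReal.bot_lt_coe t) (EReal.coe_lt_top t)] with x hx
    simp [extCDF, hx.1.ne', hx.2.ne]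

lemma extCDF_eq_one_of_sSup_le (hF : IsCDF F) {e : EReal}
    (he : sSup ((fun x : ℝ => (x : EReal)) '' {x | F x < 1}) ≤ e) : extCDF F e = 1 := by
  have hlt : ∀ u, F u < 1 → (u : EReal) ≤ e := fun u hu => (le_sSup (mem_image_of_mem _ (show u ∈ {x | F x < 1} from hu))).trans he
  induction e using EReal.rec with
  | top => exact extCDF_top
  | bot =>
    obtain ⟨x, hx⟩ := (hF.2.2.1.eventually_lt_const zero_lt_one).exists
    exact absurd (le_bot_iff.1 (hlt x hx)) (EReal.coe_ne_bot x)
  | coe t =>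
    have hright : ∀ u ∈ Ioi t, F u = 1 := fun u hu =>
      (hF.le_one u).eq_or_lt.resolve_right fun h1 => (EReal.coe_le_coe_iff.1 (hlt u h1)).not_gt hu
    rw [extCDF_coe]
    exact tendsto_nhds_unique (((hF.2.1 t).mono Ioi_subset_Ici_self).tendsto)
      (tendsto_const_nhds.congr' (eventually_mem_nhdsWithin.mono fun u hu => (hright u hu).symm))

lemma extCDF_eq_zero_of_le_sInf (hF : IsCDF F) (hFc : Continuous F) {e : EReal}
    (he : e ≤ sInf ((fun x : ℝ => (x : EReal)) '' {x | 0 < F x})) : extCDF F e = 0 := by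
  have hgt : ∀ u, 0 < F u → e ≤ (u : EReal) := fun u hu => he.trans (sInf_le (mem_image_of_mem _ (show u ∈ {x | 0 < F x} from hu)))
  induction e using EReal.rec with
  | bot => exact extCDF_bot
  | top =>
    obtain ⟨x, hx⟩ := (hF.2.2.2.eventually_const_lt zero_lt_one).exists
    exact absurd (top_le_iff.1 (hgt x hx)) (EReal.coe_ne_top x)
  | coe t =>
    have hleft : ∀ u ∈ Iio t, F u = 0 := fun u hu =>
      ((hF.nonneg u).eq_or_lt.resolve_right fun h0 => (EReal.coe_le_coe_iff.1 (hgt u h0)).not_gt hu).symm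
    rw [extCDF_coe]
    exact tendsto_nhds_unique ((hFc.tendsto t).mono_left nhdsWithin_le_nhds)
      (tendsto_const_nhds.congr' (eventually_mem_nhdsWithin.mono fun u hu => (hleft u hu).symm))

end extCDF

lemma Fin.sum_sub_eq_of_chain {α : Type*} [AddCommGroup α] {n : ℕ} (hn : 0 < n) (A B : Fin n → α)
    (h : ∀ j : Fin n, ∀ hj : (j : ℕ) + 1 < n, A j = B ⟨(j : ℕ) + 1, hj⟩) :
    ∑ j, (A j - B j) = A ⟨n - 1, by omega⟩ - B ⟨0, hn⟩ := by
  obtain ⟨k, rfl⟩ : ∃ k, n = k + 1 := ⟨n - 1, by omega⟩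
  induction k with
  | zero => simp
  | succ k ih =>
    rw [Fin.sum_univ_castSucc, ih (by omega) (fun j => A j.castSucc) (fun j => B j.castSucc)
      (fun j hj => h j.castSucc (by rw [Fin.val_castSucc]; omega))]
    simp only [Fin.castSucc_mk, Nat.add_sub_cancel, Fin.last]
    rw [h ⟨k, by omega⟩ (by simp)]
    abel

section Generator

variable {X ι : Type*} [Fintype ι] {F : ℝ → ℝ}

/-- `∑ⱼ ∫_{b j t}^{a j t} dF` -/
noncomputable def stieltjesSum (F : ℝ → ℝ) (a b : ι → X → EReal) (t : X) : ℝ :=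
  ∑ j, (extCDF F (a j t) - extCDF F (b j t))

lemma stieltjesSum_nonneg (hF : IsCDF F) {a b : ι → X → EReal} {t : X} (h : ∀ j, b j t ≤ a j t) :
    0 ≤ stieltjesSum F a b t :=
  Finset.sum_nonneg fun j _ => sub_nonneg.2 (extCDF_mono hF (h j))

lemma stieltjesSum_eq_zero {a b : ι → X → EReal} {t : X} (h : ∀ j, a j t = b j t) :
    stieltjesSum F a b t = 0 :=
  Finset.sum_eq_zero fun j _ => by rw [h j, sub_self]

lemma monotone_stieltjesSum [Preorder X] (hF : IsCDF F) {a b : ι → X → EReal}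
    (ha : ∀ j, Monotone (a j)) (hb : ∀ j, Antitone (b j)) : Monotone (stieltjesSum F a b) :=
  fun _ _ hst => Finset.sum_le_sum fun j _ =>
    sub_le_sub (extCDF_mono hF (ha j hst)) (extCDF_mono hF (hb j hst))

lemma antitone_stieltjesSum [Preorder X] (hF : IsCDF F) {a b : ι → X → EReal}
    (ha : ∀ j, Antitone (a j)) (hb : ∀ j, Monotone (b j)) : Antitone (stieltjesSum F a b) :=
  fun _ _ hst => Finset.sum_le_sum fun j _ =>
    sub_le_sub (extCDF_mono hF (ha j hst)) (extCDF_mono hF (hb j hst))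

lemma continuous_stieltjesSum [TopologicalSpace X] (hF : IsCDF F) (hFc : Continuous F)
    {a b : ι → X → EReal} (ha : ∀ j, Continuous (a j)) (hb : ∀ j, Continuous (b j)) :
    Continuous (stieltjesSum F a b) :=
  continuous_finsetSum _ fun j _ =>
    ((continuous_extCDF hF hFc).comp (ha j)).sub ((continuous_extCDF hF hFc).comp (hb j))

lemma stieltjesSum_eq_of_chain {n : ℕ} (hn : 0 < n) {a b : Fin n → X → EReal} {t : X}
    (h : ∀ j : Fin n, ∀ hj : (j : ℕ) + 1 < n, a j t = b ⟨(j : ℕ) + 1, hj⟩ t) :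
    stieltjesSum F a b t = extCDF F (a ⟨n - 1, by omega⟩ t) - extCDF F (b ⟨0, hn⟩ t) :=
  Fin.sum_sub_eq_of_chain hn _ _ fun j hj => by rw [h j hj]

noncomputable def generator (F : ℝ → ℝ) (𝒰 ϑ : X → ℝ) (μ ℓ mm ν : ι → X → EReal) (t : X) : ℝ :=
  𝒰 t * stieltjesSum F μ ℓ t - ϑ t * stieltjesSum F ν mm t

variable {𝒰 ϑ : X → ℝ} {μ ℓ mm ν : ι → X → EReal}

lemma monotone_generator [Preorder X] [OrderBot X] [OrderTop X] (hF : IsCDF F)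
    (hU₀ : ∀ t, 0 ≤ 𝒰 t) (hϑ₀ : ∀ t, 0 ≤ ϑ t)
    (hU : Monotone 𝒰) (hμ : ∀ j, Monotone (μ j)) (hm : ∀ j, Monotone (mm j))
    (hϑ : Antitone ϑ) (hν : ∀ j, Antitone (ν j)) (hℓ : ∀ j, Antitone (ℓ j))
    (hℓμ : ∀ j, ℓ j ⊥ ≤ μ j ⊥) (hmν : ϑ ⊥ ≠ 0 → ∀ j, mm j ⊤ ≤ ν j ⊤) :
    Monotone (generator F 𝒰 ϑ μ ℓ mm ν) := by
  have hS₀ : ∀ t, 0 ≤ stieltjesSum F μ ℓ t := fun t => stieltjesSum_nonneg hF fun j =>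
    ((hℓ j bot_le).trans (hℓμ j)).trans (hμ j bot_le)
  have hUS := hU.mul (monotone_stieltjesSum hF hμ hℓ) hU₀ hS₀
  have hϑT : Antitone fun t => ϑ t * stieltjesSum F ν mm t := by
    rcases eq_or_ne (ϑ ⊥) 0 with h0 | h0
    · have hϑ_zero : ∀ t, ϑ t = 0 := fun t => le_antisymm (h0 ▸ hϑ bot_le) (hϑ₀ t)
      simp only [hϑ_zero, zero_mul]
      exact antitone_const
    · have hT₀ : ∀ t, 0 ≤ stieltjesSum F ν mm t := fun t => stieltjesSum_nonneg hF fun j =>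
        ((hm j le_top).trans (hmν h0 j)).trans (hν j le_top)
      exact fun s t hst => mul_le_mul (hϑ hst) (antitone_stieltjesSum hF hν hm hst) (hT₀ t) (hϑ₀ s)
  exact fun s t hst => sub_le_sub (hUS hst) (hϑT hst)

lemma continuous_generator [TopologicalSpace X] (hF : IsCDF F) (hFc : Continuous F)
    (hU : Continuous 𝒰) (hϑ : Continuous ϑ)
    (hμ : ∀ j, Continuous (μ j)) (hℓ : ∀ j, Continuous (ℓ j))
    (hm : ∀ j, Continuous (mm j)) (hν : ∀ j, Continuous (ν j)) :
    Continuous (generator F 𝒰 ϑ μ ℓ mm ν) :=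
  (hU.mul (continuous_stieltjesSum hF hFc hμ hℓ)).sub
    (hϑ.mul (continuous_stieltjesSum hF hFc hν hm))

lemma generator_eq_zero {t : X}
    (h3 : 𝒰 t ≠ ϑ t → (𝒰 t = 0 ∨ ∀ j, μ j t = ℓ j t) ∧ (ϑ t = 0 ∨ ∀ j, mm j t = ν j t))
    (h4 : 𝒰 t = ϑ t → 𝒰 t ≠ 0 → ∀ j, μ j t = ν j t ∧ mm j t = ℓ j t) :
    generator F 𝒰 ϑ μ ℓ mm ν t = 0 := by
  rw [generator]
  rcases eq_or_ne (𝒰 t) (ϑ t) with he | hne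
  · rcases eq_or_ne (𝒰 t) 0 with h0 | h0
    · rw [← he, h0, zero_mul, zero_mul, sub_zero]
    · have hST : stieltjesSum F μ ℓ t = stieltjesSum F ν mm t :=
        Finset.sum_congr rfl fun j _ => by rw [(h4 he h0 j).1, (h4 he h0 j).2]
      rw [he, hST, sub_self]
  · obtain ⟨hU, hϑ⟩ := h3 hne
    have hUS : 𝒰 t * stieltjesSum F μ ℓ t = 0 := hU.elim (fun h => by rw [h, zero_mul])
      fun h => by rw [stieltjesSum_eq_zero h, mul_zero]
    have hϑT : ϑ t * stieltjesSum F ν mm t = 0 := hϑ.elim (fun h => by rw [h, zero_mul])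
      fun h => by rw [stieltjesSum_eq_zero fun j => (h j).symm, mul_zero]
    rw [hUS, hϑT, sub_zero]

lemma generator_eq_one {n : ℕ} (hn : 0 < n) {μ ℓ mm ν : Fin n → X → EReal}
    (hF : IsCDF F) (hFc : Continuous F) {t : X}
    (h6a : sSup ((fun x : ℝ => (x : EReal)) '' {x | F x < 1}) ≤ μ ⟨n - 1, by omega⟩ t)
    (h6b : ℓ ⟨0, hn⟩ t ≤ sInf ((fun x : ℝ => (x : EReal)) '' {x | 0 < F x}))
    (h7 : 𝒰 t = 1) (h8 : ϑ t = 0 ∨ ∀ j, ν j t = mm j t)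
    (h9 : ∀ j : Fin n, ∀ hj : (j : ℕ) + 1 < n, μ j t = ℓ ⟨(j : ℕ) + 1, hj⟩ t) :
    generator F 𝒰 ϑ μ ℓ mm ν t = 1 := by
  have hS : stieltjesSum F μ ℓ t = 1 := by
    rw [stieltjesSum_eq_of_chain hn h9, extCDF_eq_one_of_sSup_le hF h6a,
      extCDF_eq_zero_of_le_sInf hF hFc h6b, sub_zero]
  have hϑT : ϑ t * stieltjesSum F ν mm t = 0 := h8.elim (fun h => by rw [h, zero_mul])
    fun h => by rw [stieltjesSum_eq_zero h, mul_zero]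
  rw [generator, hϑT, h7, hS, one_mul, sub_zero]

end Generator

/-- Corollary 1.2: the method to generate classes of probability distributions. -/
theorem stmt_2
    (n m : ℕ) (hn : 1 ≤ n)
    (F : ℝ → ℝ) (hF : IsCDF F) (hFc : Continuous F)
    (G : Fin m → ℝ → ℝ) (hG : ∀ i, IsCDF (G i))
    (hG01 : ∀ i (x : ℝ), G i x ∈ unitInterval)
    (𝒰 ϑ : (Fin m → unitInterval) → ℝ)
    (μ ℓ mm ν : Fin n → (Fin m → unitInterval) → EReal)
    (h𝒰c : Continuous 𝒰) (hϑc : Continuous ϑ)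
    (hμc : ∀ j, Continuous (μ j)) (hℓc : ∀ j, Continuous (ℓ j))
    (hmc : ∀ j, Continuous (mm j)) (hνc : ∀ j, Continuous (ν j))
    (d1U : ∀ t, 0 ≤ 𝒰 t) (d1V : ∀ t, 0 ≤ ϑ t)
    (d2U : Monotone 𝒰) (d2μ : ∀ j, Monotone (μ j)) (d2m : ∀ j, Monotone (mm j))
    (d2ϑ : Antitone ϑ) (d2ν : ∀ j, Antitone (ν j)) (d2ℓ : ∀ j, Antitone (ℓ j))
    (d3 : 𝒰 0 ≠ ϑ 0 →
      (𝒰 0 = 0 ∨ ∀ j, μ j 0 = ℓ j 0) ∧ (ϑ 0 = 0 ∨ ∀ j, mm j 0 = ν j 0))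
    (d4 : 𝒰 0 = ϑ 0 → 𝒰 0 ≠ 0 → ∀ j, μ j 0 = ν j 0 ∧ mm j 0 = ℓ j 0)
    (d5a : ∀ j, ℓ j 0 ≤ μ j 0)
    (d5b : ϑ 0 ≠ 0 → ∀ j, mm j 1 ≤ ν j 1)
    (d6a : sSup ((fun x : ℝ => (x : EReal)) '' {x | F x < 1}) ≤ μ ⟨n - 1, by omega⟩ 1)
    (d6b : ℓ ⟨0, by omega⟩ 1 ≤ sInf ((fun x : ℝ => (x : EReal)) '' {x | 0 < F x}))
    (d7 : 𝒰 1 = 1)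
    (d8 : ϑ 1 = 0 ∨ ∀ j, ν j 1 = mm j 1)
    (d9 : ∀ j : Fin n, ∀ h : (j : ℕ) + 1 < n, μ j 1 = ℓ ⟨(j : ℕ) + 1, h⟩ 1) :
    IsCDF (fun x =>
      𝒰 (fun i => ⟨G i x, hG01 i x⟩) *
          ∑ j, (extCDF F (μ j (fun i => ⟨G i x, hG01 i x⟩))
            - extCDF F (ℓ j (fun i => ⟨G i x, hG01 i x⟩)))
        - ϑ (fun i => ⟨G i x, hG01 i x⟩) *
          ∑ j, (extCDF F (ν j (fun i => ⟨G i x, hG01 i x⟩))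
            - extCDF F (mm j (fun i => ⟨G i x, hG01 i x⟩)))) :=
  isCDF_comp_of_monotone hG hG01 (Φ := generator F 𝒰 ϑ μ ℓ mm ν)
    (monotone_generator hF d1U d1V d2U d2μ d2m d2ϑ d2ν d2ℓ d5a d5b)
    (continuous_generator hF hFc h𝒰c hϑc hμc hℓc hmc hνc)
    (generator_eq_zero d3 d4) (generator_eq_one hn hF hFc d6a d6b d7 d8 d9)
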